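/- arXiv:math-ph/0605032 — 9 statements merged into one kernel-verified Lean document; each statement's English description precedes it below -/
import Mathlib

section
/- (Lemma A.6, first part.) For every a, b ∈ 𝔪 one has ⟪[a, I a], [b, I b]⟫ = ‖[a, b]‖² + ‖[a, I b]‖². -/
open scoped RealInnerProductSpace

/-! Invariance and Jacobi give, in any Lie algebra with an invariant inner product,
`⟪[a, x], [b, y]⟫ = ⟪[a, b], [x, y]⟫ + ⟪[b, x], [a, y]⟫`. Since `𝔻` kills `[𝔪, 𝔪]`, it is
skew for the bracket on `𝔪`; with `𝔻² = -c²` on `𝔪` this yields `[I a, I b] = [a, b]` and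
`[b, I a] = [a, I b]`, and the identity with `x = I a`, `y = I b` becomes the claim. -/

section InvariantBracket

variable {𝔤 : Type*} [NormedAddCommGroup 𝔤] [InnerProductSpace ℝ 𝔤] (B : 𝔤 →ₗ[ℝ] 𝔤 →ₗ[ℝ] 𝔤)

theorem inner_bracket_bracket_eq (hanti : ∀ x y : 𝔤, B x y = -B y x)
    (hjac : ∀ x y z : 𝔤, B x (B y z) = B (B x y) z + B y (B x z))
    (hinv : ∀ x y z : 𝔤, ⟪B x y, z⟫ = -⟪y, B x z⟫) (a b x y : 𝔤) :
    ⟪B a x, B b y⟫ = ⟪B a b, B x y⟫ + ⟪B b x, B a y⟫ := by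
  have hcomm : -⟪x, B (B a b) y⟫ = ⟪B a b, B x y⟫ := by
    rw [← hinv, hanti, inner_neg_left, hinv, neg_neg]
  rw [hinv, hjac, inner_add_right, hinv b x, ← hcomm]
  ring

end InvariantBracket

section Derivation

variable {𝔤 : Type*} [AddCommGroup 𝔤] [Module ℝ 𝔤] {B : 𝔤 →ₗ[ℝ] 𝔤 →ₗ[ℝ] 𝔤} {𝔻 : 𝔤 →ₗ[ℝ] 𝔤}

theorem bracket_derivation_left_eq_neg (hder : ∀ x y : 𝔤, 𝔻 (B x y) = B (𝔻 x) y + B x (𝔻 y))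
    {x y : 𝔤} (h : 𝔻 (B x y) = 0) : B (𝔻 x) y = -B x (𝔻 y) :=
  eq_neg_of_add_eq_zero_left ((hder x y).symm.trans h)

theorem bracket_derivation_comm (hanti : ∀ x y : 𝔤, B x y = -B y x)
    (hder : ∀ x y : 𝔤, 𝔻 (B x y) = B (𝔻 x) y + B x (𝔻 y))
    {x y : 𝔤} (h : 𝔻 (B y x) = 0) : B x (𝔻 y) = B y (𝔻 x) := by
  have := bracket_derivation_left_eq_neg hder h
  rwa [hanti, neg_inj] at this

theorem bracket_derivation_derivation (hder : ∀ x y : 𝔤, 𝔻 (B x y) = B (𝔻 x) y + B x (𝔻 y))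
    {c : ℝ} {x y : 𝔤} (h : 𝔻 (B x (𝔻 y)) = 0) (hy : 𝔻 (𝔻 y) = -(c ^ 2) • y) :
    B (𝔻 x) (𝔻 y) = c ^ 2 • B x y := by
  rw [bracket_derivation_left_eq_neg hder h, hy, map_smul, neg_smul, neg_neg]

end Derivation

/-- **Lemma A.6, first part.** `𝔤` is a real Lie algebra (with bracket given by
the bilinear map `B`, antisymmetric and satisfying the Jacobi identity) which is also a real
inner product space whose inner product is invariant: `⟪[x,y], z⟫ = -⟪y, [x,z]⟫`.
With `𝔻`, `c`, `𝔪` and `I u = (1/c) • 𝔻 u` as in the setting of an irreducible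
Hermitian-symmetric affine coadjoint orbit of a compact-type `L*`-group, for all `a, b ∈ 𝔪`
one has `⟪[a, I a], [b, I b]⟫ = ‖[a, b]‖² + ‖[a, I b]‖²`. -/
theorem stmt2 (𝔤 : Type*) [NormedAddCommGroup 𝔤] [InnerProductSpace ℝ 𝔤]
    (B : 𝔤 →ₗ[ℝ] 𝔤 →ₗ[ℝ] 𝔤)
    (hanti : ∀ x y : 𝔤, B x y = -B y x)
    (hjac : ∀ x y z : 𝔤, B x (B y z) = B (B x y) z + B y (B x z))
    (hinv : ∀ x y z : 𝔤, ⟪B x y, z⟫ = -⟪y, B x z⟫)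
    (𝔻 : 𝔤 →ₗ[ℝ] 𝔤)
    (hder : ∀ x y : 𝔤, 𝔻 (B x y) = B (𝔻 x) y + B x (𝔻 y))
    (c : ℝ) (hc : 0 < c)
    (𝔪 : Submodule ℝ 𝔤)
    (hDm : ∀ u ∈ 𝔪, 𝔻 u ∈ 𝔪)
    (hD2 : ∀ u ∈ 𝔪, 𝔻 (𝔻 u) = -(c ^ 2) • u)
    (hbr : ∀ u ∈ 𝔪, ∀ v ∈ 𝔪, 𝔻 (B u v) = 0)
    (I : 𝔤 → 𝔤) (hI : ∀ u, I u = (1 / c) • 𝔻 u)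
    (a b : 𝔤) (ha : a ∈ 𝔪) (hb : b ∈ 𝔪) :
    ⟪B a (I a), B b (I b)⟫ = ‖B a b‖ ^ 2 + ‖B a (I b)‖ ^ 2 := by
  have hbIa : B b (I a) = B a (I b) := by
    rw [hI, hI, map_smul, map_smul, bracket_derivation_comm hanti hder (hbr a ha b hb)]
  have hIaIb : B (I a) (I b) = B a b := by
    rw [hI, hI, map_smul, map_smul, LinearMap.smul_apply,
      bracket_derivation_derivation hder (hbr a ha _ (hDm b hb)) (hD2 b hb), smul_smul, smul_smul]
    field_simp
    rw [one_smul]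
  rw [inner_bracket_bracket_eq B hanti hjac hinv, hIaIb, hbIa, real_inner_self_eq_norm_sq,
    real_inner_self_eq_norm_sq]
end

section
/- (Lemma 6.3, iterate form: φ(ad(iIV)²)(V) = φ(I R_{IV,V})(V) on monomials.) Let J : 𝔤 → 𝔤 be a ℂ-linear map with J(x α) = y α and J(y α) = −x α for all α ∈ Ψ. Let v : Ψ → ℝ, set V := ∑_{α∈Ψ} v α • x α and W := ∑_{α∈Ψ} v α • y α. Then for every natural number n, the n-th iterate of the map z ↦ J([[W, V], z]) applied to V equals ∑_{α∈Ψ} (2·v α)^{2n} · v α • x α, which also equals (ad(i•W))^{2n}(V). -/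
/-!
Both maps act diagonally in the families `x` and `h`: with `W = ∑ α, v α • y α`, strong
orthogonality gives `ad(i W) (x α) = 2 v α • h α` and `ad(i W) (h α) = 2 v α • x α`, so
`ad(i W)²` scales `x α` by `(2 v α)²`; and `[W, V] = -2i ∑ α, (v α)² • h α`, so
`z ↦ J [[W, V], z]` also scales `x α` by `(2 v α)²`. Iterating a diagonal map on
`V = ∑ α, v α • x α` multiplies each coefficient by the corresponding power.
-/

open Complex

section Diagonal

variable {R ι : Type*} [Fintype ι]

theorem sum_smul_lie_of_ne {L : Type*} [CommRing R] [LieRing L] [LieAlgebra R L] {a b : ι → L}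
    (hab : ∀ α β, α ≠ β → ⁅a α, b β⁆ = 0) (c : ι → R) (β : ι) :
    ⁅∑ α, c α • a α, b β⁆ = c β • ⁅a β, b β⁆ := by
  rw [sum_lie, Finset.sum_eq_single β (fun α _ hαβ => by rw [smul_lie, hab α β hαβ, smul_zero])
    (fun hβ => absurd (Finset.mem_univ β) hβ), smul_lie]

theorem iterate_sum_smul_of_diagonal {M : Type*} [Semiring R] [AddCommMonoid M] [Module R M]
    (f : M → M) (e : ι → M) (d : ι → R)
    (hf : ∀ c : ι → R, f (∑ i, c i • e i) = ∑ i, (d i * c i) • e i) (n : ℕ) (c : ι → R) :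
    f^[n] (∑ i, c i • e i) = ∑ i, (d i ^ n * c i) • e i := by
  induction n with
  | zero => simp
  | succ n ih =>
    rw [Function.iterate_succ_apply', ih, hf]
    simp only [pow_succ', mul_assoc]

end Diagonal

section StronglyOrthogonal

variable {𝔤 Ψ : Type*} [LieRing 𝔤] [LieAlgebra ℂ 𝔤] [Fintype Ψ] {x y h : Ψ → 𝔤}

theorem sum_smul_lie_of_lie_eq_smul {a b : Ψ → 𝔤} (c : Ψ → 𝔤) (s : ℂ)
    (hba : ∀ α, ⁅b α, a α⁆ = s • c α) (hba' : ∀ α β, α ≠ β → ⁅b α, a β⁆ = 0)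
    (w : Ψ → ℂ) (β : Ψ) : ⁅∑ α, w α • a α, b β⁆ = (-s * w β) • c β := by
  have hab : ∀ α β, α ≠ β → ⁅a α, b β⁆ = 0 := fun α β hαβ => by
    rw [← lie_skew, hba' β α hαβ.symm, neg_zero]
  rw [sum_smul_lie_of_ne hab, ← lie_skew, hba, smul_neg, ← neg_smul, smul_smul]
  ring_nf

theorem lie_smul_I_sum_smul_x (v : Ψ → ℝ)
    (hxy : ∀ α, ⁅x α, y α⁆ = (2 * I) • h α) (hxy' : ∀ α β, α ≠ β → ⁅x α, y β⁆ = 0)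
    (c : Ψ → ℂ) :
    ⁅I • ∑ α, (v α : ℂ) • y α, ∑ α, c α • x α⁆ = ∑ α, (2 * v α * c α) • h α := by
  refine (lie_sum _ _ _).trans (Finset.sum_congr rfl fun β _ => ?_)
  rw [lie_smul, smul_lie, sum_smul_lie_of_lie_eq_smul h _ hxy hxy', smul_smul, smul_smul]
  ring_nf
  rw [I_sq]
  ring_nf

theorem lie_smul_I_sum_smul_h (v : Ψ → ℝ)
    (hhy : ∀ α, ⁅h α, y α⁆ = (2 * I) • x α) (hhy' : ∀ α β, α ≠ β → ⁅h α, y β⁆ = 0)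
    (c : Ψ → ℂ) :
    ⁅I • ∑ α, (v α : ℂ) • y α, ∑ α, c α • h α⁆ = ∑ α, (2 * v α * c α) • x α := by
  refine (lie_sum _ _ _).trans (Finset.sum_congr rfl fun β _ => ?_)
  rw [lie_smul, smul_lie, sum_smul_lie_of_lie_eq_smul x _ hhy hhy', smul_smul, smul_smul]
  ring_nf
  rw [I_sq]
  ring_nf

theorem lie_sum_smul_y_sum_smul_x (v : Ψ → ℝ)
    (hxy : ∀ α, ⁅x α, y α⁆ = (2 * I) • h α) (hxy' : ∀ α β, α ≠ β → ⁅x α, y β⁆ = 0) :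
    ⁅∑ α, (v α : ℂ) • y α, ∑ α, (v α : ℂ) • x α⁆ = ∑ α, (-(2 * I) * v α ^ 2) • h α := by
  refine (lie_sum _ _ _).trans (Finset.sum_congr rfl fun β _ => ?_)
  rw [lie_smul, sum_smul_lie_of_lie_eq_smul h _ hxy hxy', smul_smul]
  ring_nf

theorem J_lie_lie_sum_smul_x (v : Ψ → ℝ)
    (hxy : ∀ α, ⁅x α, y α⁆ = (2 * I) • h α) (hxy' : ∀ α β, α ≠ β → ⁅x α, y β⁆ = 0)
    (hhx : ∀ α, ⁅h α, x α⁆ = (-(2 * I)) • y α) (hhx' : ∀ α β, α ≠ β → ⁅h α, x β⁆ = 0)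
    (J : 𝔤 →ₗ[ℂ] 𝔤) (hJy : ∀ α, J (y α) = -x α) (c : Ψ → ℂ) :
    J ⁅⁅∑ α, (v α : ℂ) • y α, ∑ α, (v α : ℂ) • x α⁆, ∑ α, c α • x α⁆ =
      ∑ α, ((2 * v α) ^ 2 * c α) • x α := by
  rw [lie_sum_smul_y_sum_smul_x v hxy hxy', lie_sum, map_sum]
  refine Finset.sum_congr rfl fun β _ => ?_
  rw [lie_smul, sum_smul_lie_of_ne hhx', hhx, smul_smul, smul_smul, map_smul, hJy, smul_neg,
    ← neg_smul]
  ring_nf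
  rw [I_sq]
  ring_nf

theorem ad_smul_I_sum_smul_y_iterate_two (v : Ψ → ℝ)
    (hxy : ∀ α, ⁅x α, y α⁆ = (2 * I) • h α) (hxy' : ∀ α β, α ≠ β → ⁅x α, y β⁆ = 0)
    (hhy : ∀ α, ⁅h α, y α⁆ = (2 * I) • x α) (hhy' : ∀ α β, α ≠ β → ⁅h α, y β⁆ = 0)
    (c : Ψ → ℂ) :
    (fun u => ⁅I • ∑ α, (v α : ℂ) • y α, u⁆)^[2] (∑ α, c α • x α) =
      ∑ α, ((2 * v α) ^ 2 * c α) • x α := by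
  simp only [Function.iterate_succ_apply, Function.iterate_zero_apply,
    lie_smul_I_sum_smul_x v hxy hxy', lie_smul_I_sum_smul_h v hhy hhy']
  simp only [sq, mul_assoc]

end StronglyOrthogonal

theorem stmt7_general (𝔤 : Type*) [LieRing 𝔤] [LieAlgebra ℂ 𝔤]
    (Ψ : Type*) [Fintype Ψ]
    (x y h : Ψ → 𝔤)
    (hxy : ∀ α, ⁅x α, y α⁆ = (2 * Complex.I) • h α)
    (hxy' : ∀ α β, α ≠ β → ⁅x α, y β⁆ = 0)
    (hhx : ∀ α, ⁅h α, x α⁆ = (-(2 * Complex.I)) • y α)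
    (hhx' : ∀ α β, α ≠ β → ⁅h α, x β⁆ = 0)
    (hhy : ∀ α, ⁅h α, y α⁆ = (2 * Complex.I) • x α)
    (hhy' : ∀ α β, α ≠ β → ⁅h α, y β⁆ = 0)
    (J : 𝔤 →ₗ[ℂ] 𝔤)
    (hJy : ∀ α, J (y α) = -x α)
    (v : Ψ → ℝ) (V W : 𝔤)
    (hV : V = ∑ α, (v α : ℂ) • x α)
    (hW : W = ∑ α, (v α : ℂ) • y α) :
    ∀ n : ℕ,
      (fun z => J ⁅⁅W, V⁆, z⁆)^[n] V =
          ∑ α, (((2 * v α) ^ (2 * n) * v α : ℝ) : ℂ) • x α ∧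
      (fun z => J ⁅⁅W, V⁆, z⁆)^[n] V = (fun u => ⁅Complex.I • W, u⁆)^[2 * n] V := by
  intro n
  subst hV hW
  have hJ := iterate_sum_smul_of_diagonal (fun z => J ⁅⁅_, _⁆, z⁆) x _
    (J_lie_lie_sum_smul_x v hxy hxy' hhx hhx' J hJy) n (fun α => (v α : ℂ))
  have had := iterate_sum_smul_of_diagonal _ x _
    (ad_smul_I_sum_smul_y_iterate_two v hxy hxy' hhy hhy') n (fun α => (v α : ℂ))
  have hcoeff : ∀ α, ((2 * v α : ℂ) ^ 2) ^ n * v α = (((2 * v α) ^ (2 * n) * v α : ℝ) : ℂ) :=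
    fun α => by push_cast; rw [pow_mul]
  rw [Function.iterate_mul, had, hJ]
  simp only [hcoeff, and_self]

/-- **Lemma 6.3, iterate form, on monomials.** With `J` the complex structure
(`J (x α) = y α`, `J (y α) = -x α`), `V = ∑ α, v α • x α` and `W = ∑ α, v α • y α`, for every
`n : ℕ` the `n`-th iterate of `z ↦ J [[W, V], z]` applied to `V` equals
`∑ α, (2 v α)^{2n} * v α • x α`, which also equals `(ad(i • W))^{2n}(V)`. -/
theorem stmt7 (𝔤 : Type*) [LieRing 𝔤] [LieAlgebra ℂ 𝔤]
    (Ψ : Type*) [Fintype Ψ]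
    (x y h : Ψ → 𝔤)
    (hxy : ∀ α, ⁅x α, y α⁆ = (2 * Complex.I) • h α)
    (hxy' : ∀ α β, α ≠ β → ⁅x α, y β⁆ = 0)
    (hhx : ∀ α, ⁅h α, x α⁆ = (-(2 * Complex.I)) • y α)
    (hhx' : ∀ α β, α ≠ β → ⁅h α, x β⁆ = 0)
    (hhy : ∀ α, ⁅h α, y α⁆ = (2 * Complex.I) • x α)
    (hhy' : ∀ α β, α ≠ β → ⁅h α, y β⁆ = 0)
    (J : 𝔤 →ₗ[ℂ] 𝔤)
    (hJx : ∀ α, J (x α) = y α)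
    (hJy : ∀ α, J (y α) = -x α)
    (v : Ψ → ℝ) (V W : 𝔤)
    (hV : V = ∑ α, (v α : ℂ) • x α)
    (hW : W = ∑ α, (v α : ℂ) • y α) :
    ∀ n : ℕ,
      (fun z => J ⁅⁅W, V⁆, z⁆)^[n] V =
          ∑ α, (((2 * v α) ^ (2 * n) * v α : ℝ) : ℂ) • x α ∧
      (fun z => J ⁅⁅W, V⁆, z⁆)^[n] V = (fun u => ⁅Complex.I • W, u⁆)^[2 * n] V :=
  stmt7_general 𝔤 Ψ x y h hxy hxy' hhx hhx' hhy hhy' J hJy v V W hV hW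
end

section
/- (Computation in the proof of Theorem 5.1.) Let a : Ψ → ℝ, set A := ∑_{α∈Ψ} a α • x α and B := ∑_{α∈Ψ} a α • y α. Then for every natural number n, (ad(i•A))^{2n}(B) = ∑_{α∈Ψ} (2·a α)^{2n} · a α • y α, where ad(z)(u) := [z, u]. -/
/-! `ad(iA)` maps `y α ↦ -2 a α • h α` and `h α ↦ -2 a α • y α`, the other roots of `Ψ` not
contributing by strong orthogonality. Hence `ad(iA)²` acts on each `y α` by `(2 a α)²`, and
`B = ∑ α, a α • y α` is a sum of such eigenvectors. -/

theorem LinearMap.iterate_two_mul_apply_of_apply_eq_smul {R M : Type*} [CommSemiring R]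
    [AddCommMonoid M] [Module R M] (f : M →ₗ[R] M) {u v : M} {r s : R}
    (hu : f u = r • v) (hv : f v = s • u) (n : ℕ) :
    f^[2 * n] u = (r * s) ^ n • u := by
  induction n with
  | zero => simp
  | succ n ih =>
    rw [Nat.mul_succ, Function.iterate_add_apply, Function.iterate_succ_apply, Function.iterate_one,
      hu, map_smul, hv, smul_smul, ← Module.End.pow_apply, map_smul, Module.End.pow_apply, ih,
      smul_smul, pow_succ']

theorem sum_smul_lie_eq_of_lie_eq_zero {R L ι : Type*} [CommRing R] [LieRing L]
    [LieAlgebra R L] [Fintype ι] (c : ι → R) (x : ι → L) {z : L} (i : ι)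
    (hz : ∀ j, j ≠ i → ⁅x j, z⁆ = 0) :
    ⁅∑ j, c j • x j, z⁆ = c i • ⁅x i, z⁆ := by
  rw [sum_lie, Finset.sum_eq_single_of_mem i (Finset.mem_univ i), smul_lie]
  intro j _ hj
  rw [smul_lie, hz j hj, smul_zero]

theorem stmt8_general (𝔤 : Type*) [LieRing 𝔤] [LieAlgebra ℂ 𝔤]
    (Ψ : Type*) [Fintype Ψ]
    (x y h : Ψ → 𝔤)
    (hxy : ∀ α, ⁅x α, y α⁆ = (2 * Complex.I) • h α)
    (hxy' : ∀ α β, α ≠ β → ⁅x α, y β⁆ = 0)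
    (hhx : ∀ α, ⁅h α, x α⁆ = (-(2 * Complex.I)) • y α)
    (hhx' : ∀ α β, α ≠ β → ⁅h α, x β⁆ = 0)
    (a : Ψ → ℝ) (A B : 𝔤)
    (hA : A = ∑ α, (a α : ℂ) • x α)
    (hB : B = ∑ α, (a α : ℂ) • y α) :
    ∀ n : ℕ,
      (fun u => ⁅Complex.I • A, u⁆)^[2 * n] B =
        ∑ α, (((2 * a α) ^ (2 * n) * a α : ℝ) : ℂ) • y α := by
  intro n
  set g := LieAlgebra.ad ℂ 𝔤 (Complex.I • A)
  have hg_y : ∀ α, g (y α) = (-2 * (a α : ℂ)) • h α := by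
    intro α
    rw [LieAlgebra.ad_apply, smul_lie, hA, sum_smul_lie_eq_of_lie_eq_zero _ _ α (hxy' · α),
      hxy, smul_smul, smul_smul]
    congr 1
    linear_combination (2 * (a α : ℂ)) * Complex.I_sq
  have hg_h : ∀ α, g (h α) = (-2 * (a α : ℂ)) • y α := by
    intro α
    have hx_h : ∀ β, β ≠ α → ⁅x β, h α⁆ = 0 := fun β hβ => by
      rw [← lie_skew, hhx' α β hβ.symm, neg_zero]
    rw [LieAlgebra.ad_apply, smul_lie, hA, sum_smul_lie_eq_of_lie_eq_zero _ _ α hx_h,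
      ← lie_skew, hhx]
    simp only [neg_smul, neg_neg, smul_smul]
    congr 1
    linear_combination (2 * (a α : ℂ)) * Complex.I_sq
  calc g^[2 * n] B = ∑ α, (a α : ℂ) • g^[2 * n] (y α) := by
        simp only [hB, ← Module.End.pow_apply, map_sum, map_smul]
    _ = _ := by
        refine Finset.sum_congr rfl fun α _ => ?_
        rw [g.iterate_two_mul_apply_of_apply_eq_smul (hg_y α) (hg_h α), smul_smul, pow_mul]
        congr 1
        push_cast
        ring

/-- **computation in the proof of Theorem 5.1.** With `A = ∑ α, a α • x α` and
`B = ∑ α, a α • y α`, for every `n : ℕ` one has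
`(ad(i • A))^{2n}(B) = ∑ α, (2 a α)^{2n} * a α • y α`, where `ad z u = [z, u]`. -/
theorem stmt8 (𝔤 : Type*) [LieRing 𝔤] [LieAlgebra ℂ 𝔤]
    (Ψ : Type*) [Fintype Ψ]
    (x y h : Ψ → 𝔤)
    (hxy : ∀ α, ⁅x α, y α⁆ = (2 * Complex.I) • h α)
    (hxy' : ∀ α β, α ≠ β → ⁅x α, y β⁆ = 0)
    (hhx : ∀ α, ⁅h α, x α⁆ = (-(2 * Complex.I)) • y α)
    (hhx' : ∀ α β, α ≠ β → ⁅h α, x β⁆ = 0)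
    (hhy : ∀ α, ⁅h α, y α⁆ = (2 * Complex.I) • x α)
    (hhy' : ∀ α β, α ≠ β → ⁅h α, y β⁆ = 0)
    (a : Ψ → ℝ) (A B : 𝔤)
    (hA : A = ∑ α, (a α : ℂ) • x α)
    (hB : B = ∑ α, (a α : ℂ) • y α) :
    ∀ n : ℕ,
      (fun u => ⁅Complex.I • A, u⁆)^[2 * n] B =
        ∑ α, (((2 * a α) ^ (2 * n) * a α : ℝ) : ℂ) • y α :=
  stmt8_general 𝔤 Ψ x y h hxy hxy' hhx hhx' a A B hA hB
end

section
/- (Explicit formula for the map f₁ on the maximal abelian subalgebra, from the proof of Theorem 5.1: (sinh ad(ia)/ad(ia))(Ia) = ∑_α (sinh(2a_α)/2)·y_α.) Let a : Ψ → ℝ, set A := ∑_{α∈Ψ} a α • x α and B := ∑_{α∈Ψ} a α • y α. Then the series with n-th term (1/(2n+1)!) • (ad(i•A))^{2n}(B) has sum ∑_{α∈Ψ} (sinh(2·a α)/2) • y α in 𝔤. -/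
/-!
By strong orthogonality, `ad(i A)` maps `y β ↦ -2 a β • h β` and `h β ↦ -2 a β • y β`, so each
`y β` is an eigenvector of `ad(i A)²` with eigenvalue `(2 a β)²`. Writing
`a β • y β = 2 a β • (y β / 2)`, the series on this summand becomes the power series of
`sinh (2 a β)` times `y β / 2`.
-/

open Complex

theorem LinearMap.iterate_two_mul_apply_of_apply_apply_eq_smul {R M : Type*} [Semiring R]
    [AddCommMonoid M] [Module R M] (f : M →ₗ[R] M) {c : R} {v : M} (hv : f (f v) = c • v)
    (n : ℕ) : f^[2 * n] v = c ^ n • v := by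
  induction n with
  | zero => simp
  | succ n ih =>
    rw [show 2 * (n + 1) = 2 * n + 1 + 1 by ring, Function.iterate_succ_apply',
      Function.iterate_succ_apply', ih, map_smul, map_smul, hv, smul_smul, pow_succ]

theorem LinearMap.hasSum_inv_factorial_smul_iterate_two_mul {E : Type*} [NormedAddCommGroup E]
    [NormedSpace ℂ E] (f : E →ₗ[ℂ] E) {t : ℂ} {v : E} (hv : f (f v) = t ^ 2 • v) :
    HasSum (fun n : ℕ => ((1 / (2 * n + 1).factorial : ℝ) : ℂ) • f^[2 * n] (t • v))
      (sinh t • v) := by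
  have hterm (n : ℕ) : ((1 / (2 * n + 1).factorial : ℝ) : ℂ) • f^[2 * n] (t • v)
      = (t ^ (2 * n + 1) / (2 * n + 1).factorial) • v := by
    have htv : f (f (t • v)) = t ^ 2 • t • v := by rw [map_smul, map_smul, hv, smul_comm]
    rw [f.iterate_two_mul_apply_of_apply_apply_eq_smul htv, smul_smul, smul_smul, ← pow_mul,
      pow_succ]
    push_cast
    ring_nf
  simpa only [hterm] using (hasSum_sinh t).smul_const v

theorem LinearMap.apply_sum_smul_apply_of_apply_eq_zero {R M N P ι : Type*} [CommSemiring R]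
    [AddCommMonoid M] [AddCommMonoid N] [AddCommMonoid P] [Module R M] [Module R N] [Module R P]
    [Fintype ι] (B : M →ₗ[R] N →ₗ[R] P) (c : ι → R) (x : ι → M) {z : N} (β : ι)
    (hz : ∀ α, α ≠ β → B (x α) z = 0) : B (∑ α, c α • x α) z = c β • B (x β) z := by
  rw [map_sum, LinearMap.sum_apply, Finset.sum_eq_single β (fun α _ hα => by simp [hz α hα])
    (by simp)]
  simp

section StronglyOrthogonal

variable {𝔤 Ψ : Type*} [AddCommGroup 𝔤] [Module ℂ 𝔤] [Fintype Ψ] {B : 𝔤 →ₗ[ℂ] 𝔤 →ₗ[ℂ] 𝔤}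
  {x y h : Ψ → 𝔤} (a : Ψ → ℂ)

theorem bracket_I_smul_sum_smul_y (hxy : ∀ α, B (x α) (y α) = (2 * I) • h α)
    (hxy' : ∀ α β, α ≠ β → B (x α) (y β) = 0) (β : Ψ) :
    B (I • ∑ α, a α • x α) (y β) = (-2 * a β) • h β := by
  rw [map_smul, LinearMap.smul_apply, B.apply_sum_smul_apply_of_apply_eq_zero _ _ β (hxy' · β),
    hxy, smul_smul, smul_smul]
  congr 1
  linear_combination 2 * a β * I_mul_I

theorem bracket_I_smul_sum_smul_h (hanti : ∀ u v : 𝔤, B u v = -B v u)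
    (hhx : ∀ α, B (h α) (x α) = (-(2 * I)) • y α)
    (hhx' : ∀ α β, α ≠ β → B (h α) (x β) = 0) (β : Ψ) :
    B (I • ∑ α, a α • x α) (h β) = (-2 * a β) • y β := by
  have hβ (α : Ψ) (hα : α ≠ β) : B (x α) (h β) = 0 := by rw [hanti, hhx' β α hα.symm, neg_zero]
  rw [map_smul, LinearMap.smul_apply, B.apply_sum_smul_apply_of_apply_eq_zero _ _ β hβ,
    hanti, hhx, smul_neg, smul_smul, smul_neg, smul_smul, ← neg_smul]
  congr 1
  linear_combination 2 * a β * I_mul_I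

end StronglyOrthogonal

theorem stmt9_general (𝔤 : Type*) [NormedAddCommGroup 𝔤] [NormedSpace ℂ 𝔤]
    (B : 𝔤 →ₗ[ℂ] 𝔤 →ₗ[ℂ] 𝔤)
    (hanti : ∀ u v : 𝔤, B u v = -B v u)
    (Ψ : Type*) [Fintype Ψ]
    (x y h : Ψ → 𝔤)
    (hxy : ∀ α, B (x α) (y α) = (2 * Complex.I) • h α)
    (hxy' : ∀ α β, α ≠ β → B (x α) (y β) = 0)
    (hhx : ∀ α, B (h α) (x α) = (-(2 * Complex.I)) • y α)
    (hhx' : ∀ α β, α ≠ β → B (h α) (x β) = 0)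
    (a : Ψ → ℝ) (A Bv : 𝔤)
    (hA : A = ∑ α, (a α : ℂ) • x α)
    (hB : Bv = ∑ α, (a α : ℂ) • y α) :
    HasSum
      (fun n : ℕ =>
        ((1 / (Nat.factorial (2 * n + 1)) : ℝ) : ℂ) •
          (fun u => B (Complex.I • A) u)^[2 * n] Bv)
      (∑ α, ((Real.sinh (2 * a α) / 2 : ℝ) : ℂ) • y α) := by
  subst hA hB
  set T := B (I • ∑ α, (a α : ℂ) • x α)
  have hT2 (β : Ψ) : T (T ((2⁻¹ : ℂ) • y β)) = ((2 * a β : ℝ) : ℂ) ^ 2 • (2⁻¹ : ℂ) • y β := by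
    rw [map_smul, map_smul, bracket_I_smul_sum_smul_y _ hxy hxy', map_smul,
      bracket_I_smul_sum_smul_h _ hanti hhx hhx', smul_smul, smul_smul, smul_smul]
    push_cast
    ring_nf
  have hBv (β : Ψ) : (a β : ℂ) • y β = ((2 * a β : ℝ) : ℂ) • (2⁻¹ : ℂ) • y β := by
    rw [smul_smul]
    push_cast
    ring_nf
  have hsinh (β : Ψ) : ((Real.sinh (2 * a β) / 2 : ℝ) : ℂ) • y β
      = sinh ((2 * a β : ℝ) : ℂ) • (2⁻¹ : ℂ) • y β := by
    rw [smul_smul, ← ofReal_sinh]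
    push_cast
    ring_nf
  simp only [hsinh]
  convert hasSum_sum fun β _ => T.hasSum_inv_factorial_smul_iterate_two_mul (hT2 β) with n
  rw [← Module.End.pow_apply, map_sum, Finset.smul_sum]
  simp only [Module.End.pow_apply, hBv]

/-- **explicit formula for `f₁`, proof of Theorem 5.1.** `𝔤` is a complex Lie
algebra (bracket given by the bilinear map `B`, antisymmetric and Jacobi) which is also a
normed `ℂ`-vector space.  With `A = ∑ α, a α • x α` and `Bv = ∑ α, a α • y α`, the series
with `n`-th term `(1/(2n+1)!) • (ad(i • A))^{2n}(Bv)` has sum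
`∑ α, (sinh(2 a α)/2) • y α`, i.e. `(sinh ad(ia)/ad(ia))(Ia) = ∑ α (sinh(2a_α)/2) • y_α`. -/
theorem stmt9 (𝔤 : Type*) [NormedAddCommGroup 𝔤] [NormedSpace ℂ 𝔤]
    (B : 𝔤 →ₗ[ℂ] 𝔤 →ₗ[ℂ] 𝔤)
    (hanti : ∀ u v : 𝔤, B u v = -B v u)
    (hjac : ∀ u v w : 𝔤, B u (B v w) = B (B u v) w + B v (B u w))
    (Ψ : Type*) [Fintype Ψ]
    (x y h : Ψ → 𝔤)
    (hxy : ∀ α, B (x α) (y α) = (2 * Complex.I) • h α)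
    (hxy' : ∀ α β, α ≠ β → B (x α) (y β) = 0)
    (hhx : ∀ α, B (h α) (x α) = (-(2 * Complex.I)) • y α)
    (hhx' : ∀ α β, α ≠ β → B (h α) (x β) = 0)
    (hhy : ∀ α, B (h α) (y α) = (2 * Complex.I) • x α)
    (hhy' : ∀ α β, α ≠ β → B (h α) (y β) = 0)
    (a : Ψ → ℝ) (A Bv : 𝔤)
    (hA : A = ∑ α, (a α : ℂ) • x α)
    (hB : Bv = ∑ α, (a α : ℂ) • y α) :
    HasSum
      (fun n : ℕ =>
        ((1 / (Nat.factorial (2 * n + 1)) : ℝ) : ℂ) •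
          (fun u => B (Complex.I • A) u)^[2 * n] Bv)
      (∑ α, ((Real.sinh (2 * a α) / 2 : ℝ) : ℂ) • y α) :=
  stmt9_general 𝔤 B hanti Ψ x y h hxy hxy' hhx hhx' a A Bv hA hB
end

section
/- (Lemma 6.1, on the maximal abelian subalgebra: ((cosh ad(ia) − 1)/ad(ia)²)([Ia, a]) = ((√(1 + ad(iV)²) − 1)/ad(iV)²)([IV, V]).) Let a : Ψ → ℝ, set A := ∑_{α∈Ψ} a α • x α and B := ∑_{α∈Ψ} a α • y α, and for each α set v α := sinh(2·a α)/2. Then the series with n-th term (1/(2n+2)!) • (ad(i•A))^{2n}([B, A]) has sum (−i/2) • ∑_{α∈Ψ} (√(1 + 4·(v α)²) − 1) • h α in 𝔤. -/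
/-!
Writing `A = ∑ a α • x α`, the relations make `ad(i A)` swap `h α` and `y α` up to the factor
`-2 a α`, so each `h α` is an eigenvector of `ad(i A)²` with eigenvalue `(2 a α)²`. Since
`[Bv, A] = ∑ (-2 i a α²) • h α`, the series splits along the `h α` into the scalar series
`(-i/2) ∑ (2 a α)^(2n+2) / (2n+2)! = (-i/2) (cosh (2 a α) - 1)`, and
`√(1 + sinh² (2 a α)) = cosh (2 a α)`.
-/

theorem Complex.hasSum_pow_two_mul_add_two_div_factorial (z : ℂ) :
    HasSum (fun n : ℕ => z ^ (2 * n + 2) / (2 * n + 2).factorial) (cosh z - 1) := by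
  refine (hasSum_nat_add_iff (f := fun n : ℕ => z ^ (2 * n) / (2 * n).factorial) 1).mpr ?_
  simpa using hasSum_cosh z

theorem Real.sqrt_one_add_sinh_sq (x : ℝ) : √(1 + sinh x ^ 2) = cosh x := by
  rw [← cosh_sq', sqrt_sq (cosh_pos x).le]

theorem LinearMap.iterate_sum_smul_of_apply_eq_smul {R M ι : Type*} [CommSemiring R]
    [AddCommMonoid M] [Module R M] [Fintype ι] (g : M →ₗ[R] M) (e : ι → M) (c d : ι → R)
    (hg : ∀ i, g (e i) = c i • e i) (n : ℕ) :
    g^[n] (∑ i, d i • e i) = ∑ i, (c i ^ n * d i) • e i := by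
  induction n with
  | zero => simp
  | succ n ih =>
    rw [Function.iterate_succ_apply', ih, map_sum]
    refine Finset.sum_congr rfl fun i _ => ?_
    rw [map_smul, hg, smul_smul, pow_succ, mul_right_comm]

theorem LinearMap.sum_smul_apply_of_apply_eq_zero {R M ι : Type*} [CommSemiring R]
    [AddCommMonoid M] [Module R M] [Fintype ι] (B : M →ₗ[R] M →ₗ[R] M) (x : ι → M) (z : M)
    (c : ι → R) (i : ι) (hB : ∀ j, j ≠ i → B (x j) z = 0) :
    B (∑ j, c j • x j) z = c i • B (x i) z := by
  rw [map_sum, LinearMap.sum_apply, Finset.sum_eq_single i (fun j _ hj => ?_) (by simp)]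
  · simp
  · simp [hB j hj]

section SlTwoTriples

variable {𝔤 Ψ : Type*} [AddCommGroup 𝔤] [Module ℂ 𝔤] [Fintype Ψ]
  (B : 𝔤 →ₗ[ℂ] 𝔤 →ₗ[ℂ] 𝔤) (x y h : Ψ → 𝔤) (c : Ψ → ℂ)

theorem bracket_sum_smul_x_h (hanti : ∀ u v : 𝔤, B u v = -B v u)
    (hhx : ∀ α, B (h α) (x α) = (-(2 * Complex.I)) • y α)
    (hhx' : ∀ α β, α ≠ β → B (h α) (x β) = 0) (α : Ψ) :
    B (∑ β, c β • x β) (h α) = (2 * Complex.I * c α) • y α := by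
  rw [B.sum_smul_apply_of_apply_eq_zero x _ _ α fun β hβ => by rw [hanti, hhx' α β hβ.symm,
    neg_zero], hanti, hhx, neg_smul, neg_neg, smul_smul, mul_comm]

theorem bracket_sum_smul_x_y (hxy : ∀ α, B (x α) (y α) = (2 * Complex.I) • h α)
    (hxy' : ∀ α β, α ≠ β → B (x α) (y β) = 0) (α : Ψ) :
    B (∑ β, c β • x β) (y α) = (2 * Complex.I * c α) • h α := by
  rw [B.sum_smul_apply_of_apply_eq_zero x _ _ α fun β hβ => hxy' β α hβ, hxy, smul_smul, mul_comm]

theorem bracket_sum_smul_y_sum_smul_x (hanti : ∀ u v : 𝔤, B u v = -B v u)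
    (hxy : ∀ α, B (x α) (y α) = (2 * Complex.I) • h α)
    (hxy' : ∀ α β, α ≠ β → B (x α) (y β) = 0) :
    B (∑ α, c α • y α) (∑ α, c α • x α) = ∑ α, (-(2 * Complex.I) * c α ^ 2) • h α := by
  rw [hanti, map_sum, ← Finset.sum_neg_distrib]
  refine Finset.sum_congr rfl fun α _ => ?_
  rw [map_smul, bracket_sum_smul_x_y B x y h c hxy hxy', smul_smul, ← neg_smul]
  ring_nf

theorem ad_I_smul_sum_smul_x_sq_h (hanti : ∀ u v : 𝔤, B u v = -B v u)
    (hxy : ∀ α, B (x α) (y α) = (2 * Complex.I) • h α)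
    (hxy' : ∀ α β, α ≠ β → B (x α) (y β) = 0)
    (hhx : ∀ α, B (h α) (x α) = (-(2 * Complex.I)) • y α)
    (hhx' : ∀ α β, α ≠ β → B (h α) (x β) = 0) (α : Ψ) :
    (B (Complex.I • ∑ β, c β • x β) ^ 2) (h α) = (2 * c α) ^ 2 • h α := by
  simp only [pow_two, Module.End.mul_apply, map_smul, LinearMap.smul_apply,
    bracket_sum_smul_x_h B x y h c hanti hhx hhx',
    bracket_sum_smul_x_y B x y h c hxy hxy', smul_smul]
  congr 1
  linear_combination (4 * c α ^ 2 * (Complex.I ^ 2 - 1)) * Complex.I_sq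

end SlTwoTriples

theorem stmt10_general (𝔤 : Type*) [NormedAddCommGroup 𝔤] [NormedSpace ℂ 𝔤]
    (B : 𝔤 →ₗ[ℂ] 𝔤 →ₗ[ℂ] 𝔤)
    (hanti : ∀ u v : 𝔤, B u v = -B v u)
    (Ψ : Type*) [Fintype Ψ]
    (x y h : Ψ → 𝔤)
    (hxy : ∀ α, B (x α) (y α) = (2 * Complex.I) • h α)
    (hxy' : ∀ α β, α ≠ β → B (x α) (y β) = 0)
    (hhx : ∀ α, B (h α) (x α) = (-(2 * Complex.I)) • y α)
    (hhx' : ∀ α β, α ≠ β → B (h α) (x β) = 0)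
    (a v : Ψ → ℝ) (A Bv : 𝔤)
    (hA : A = ∑ α, (a α : ℂ) • x α)
    (hB : Bv = ∑ α, (a α : ℂ) • y α)
    (hv : ∀ α, v α = Real.sinh (2 * a α) / 2) :
    HasSum
      (fun n : ℕ =>
        ((1 / (Nat.factorial (2 * n + 2)) : ℝ) : ℂ) •
          (fun u => B (Complex.I • A) u)^[2 * n] (B Bv A))
      ((-Complex.I / 2) •
        ∑ α, ((Real.sqrt (1 + 4 * v α ^ 2) - 1 : ℝ) : ℂ) • h α) := by
  have hterm : ∀ n : ℕ, ((1 / (Nat.factorial (2 * n + 2)) : ℝ) : ℂ) •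
      (B (Complex.I • A))^[2 * n] (B Bv A) =
      ∑ α, ((-Complex.I / 2) * ((2 * (a α : ℂ)) ^ (2 * n + 2) / (2 * n + 2).factorial)) • h α :=
      fun n => by
    rw [Function.iterate_mul, ← Module.End.coe_pow, hA, hB,
      bracket_sum_smul_y_sum_smul_x B x y h _ hanti hxy hxy',
      LinearMap.iterate_sum_smul_of_apply_eq_smul _ h _ _
        (ad_I_smul_sum_smul_x_sq_h B x y h _ hanti hxy hxy' hhx hhx'), Finset.smul_sum]
    refine Finset.sum_congr rfl fun α _ => ?_
    rw [smul_smul, pow_add, pow_mul]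
    congr 1
    push_cast
    field_simp
  have hcosh : ∀ α, ((Real.sqrt (1 + 4 * v α ^ 2) - 1 : ℝ) : ℂ) = Complex.cosh (2 * a α) - 1 :=
      fun α => by
    rw [show 1 + 4 * v α ^ 2 = 1 + Real.sinh (2 * a α) ^ 2 by rw [hv]; ring,
      Real.sqrt_one_add_sinh_sq]
    push_cast
    rfl
  rw [Finset.smul_sum]
  refine HasSum.congr_fun (hasSum_sum fun α _ => ?_) hterm
  rw [smul_smul, hcosh]
  exact ((Complex.hasSum_pow_two_mul_add_two_div_factorial _).mul_left _).smul_const (h α)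

/-- **Lemma 6.1 on the maximal abelian subalgebra.** `𝔤` is a complex Lie
algebra (bracket given by the bilinear map `B`, antisymmetric and Jacobi) which is also a
normed `ℂ`-vector space.  With `A = ∑ α, a α • x α`, `Bv = ∑ α, a α • y α` and
`v α = sinh(2 a α)/2`, the series with `n`-th term
`(1/(2n+2)!) • (ad(i • A))^{2n}([Bv, A])` has sum
`(-i/2) • ∑ α, (√(1 + 4 (v α)²) - 1) • h α`. -/
theorem stmt10 (𝔤 : Type*) [NormedAddCommGroup 𝔤] [NormedSpace ℂ 𝔤]
    (B : 𝔤 →ₗ[ℂ] 𝔤 →ₗ[ℂ] 𝔤)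
    (hanti : ∀ u v : 𝔤, B u v = -B v u)
    (hjac : ∀ u v w : 𝔤, B u (B v w) = B (B u v) w + B v (B u w))
    (Ψ : Type*) [Fintype Ψ]
    (x y h : Ψ → 𝔤)
    (hxy : ∀ α, B (x α) (y α) = (2 * Complex.I) • h α)
    (hxy' : ∀ α β, α ≠ β → B (x α) (y β) = 0)
    (hhx : ∀ α, B (h α) (x α) = (-(2 * Complex.I)) • y α)
    (hhx' : ∀ α β, α ≠ β → B (h α) (x β) = 0)
    (hhy : ∀ α, B (h α) (y α) = (2 * Complex.I) • x α)
    (hhy' : ∀ α β, α ≠ β → B (h α) (y β) = 0)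
    (a v : Ψ → ℝ) (A Bv : 𝔤)
    (hA : A = ∑ α, (a α : ℂ) • x α)
    (hB : Bv = ∑ α, (a α : ℂ) • y α)
    (hv : ∀ α, v α = Real.sinh (2 * a α) / 2) :
    HasSum
      (fun n : ℕ =>
        ((1 / (Nat.factorial (2 * n + 2)) : ℝ) : ℂ) •
          (fun u => B (Complex.I • A) u)^[2 * n] (B Bv A))
      ((-Complex.I / 2) •
        ∑ α, ((Real.sqrt (1 + 4 * v α ^ 2) - 1 : ℝ) : ℂ) • h α) :=
  stmt10_general 𝔤 B hanti Ψ x y h hxy hxy' hhx hhx' a v A Bv hA hB hv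
end

section
/- (Diagonalization of the endomorphism A_V of Theorem 6.1 on strongly orthogonal root vectors.) Let J : 𝔤 → 𝔤 be a ℂ-linear map with J(x α) = y α and J(y α) = −x α for all α ∈ Ψ. Let w : Ψ → ℝ and set V := ∑_{α∈Ψ} w α • x α and W := ∑_{α∈Ψ} w α • y α. Then for every β ∈ Ψ: x β + J([[W, V], x β]) = (1 + 4·(w β)²) • x β, and y β + J([[W, V], y β]) = (1 + 4·(w β)²) • y β. -/
/-!
Strong orthogonality makes every bracket below diagonal in `Ψ`: `⁅V, W⁆` collapses to
`∑ α, (w α)² • ⁅x α, y α⁆ = 2i ∑ α, (w α)² • h α`, and bracketing once more with `h α` rotates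
`x β ↦ -2i y β`, `y β ↦ 2i x β`. Hence `⁅⁅W, V⁆, x β⁆ = -4 (w β)² • y β` and
`⁅⁅W, V⁆, y β⁆ = 4 (w β)² • x β`, which `J` turns into `4 (w β)² • x β` and `4 (w β)² • y β`.
-/

theorem sum_smul_lie_of_lie_eq_zero {R L ι : Type*} [CommRing R] [LieRing L] [LieAlgebra R L]
    [Fintype ι] (a b : ι → L) (c : ι → R) (hab : ∀ α β, α ≠ β → ⁅a α, b β⁆ = 0) (β : ι) :
    ⁅∑ α, c α • a α, b β⁆ = c β • ⁅a β, b β⁆ := by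
  rw [sum_lie, Finset.sum_eq_single β]
  · exact smul_lie _ _ _
  · intro α _ hα
    rw [smul_lie, hab α β hα, smul_zero]
  · simp

/-- **diagonalization of the endomorphism `A_V` of Theorem 6.1.** With `J` the
complex structure (`J (x α) = y α`, `J (y α) = -x α`), `V = ∑ α, w α • x α` and
`W = ∑ α, w α • y α`, for every `β`:
`x β + J [[W, V], x β] = (1 + 4 (w β)²) • x β` and
`y β + J [[W, V], y β] = (1 + 4 (w β)²) • y β`. -/
theorem stmt11 (𝔤 : Type*) [LieRing 𝔤] [LieAlgebra ℂ 𝔤]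
    (Ψ : Type*) [Fintype Ψ]
    (x y h : Ψ → 𝔤)
    (hxy : ∀ α, ⁅x α, y α⁆ = (2 * Complex.I) • h α)
    (hxy' : ∀ α β, α ≠ β → ⁅x α, y β⁆ = 0)
    (hhx : ∀ α, ⁅h α, x α⁆ = (-(2 * Complex.I)) • y α)
    (hhx' : ∀ α β, α ≠ β → ⁅h α, x β⁆ = 0)
    (hhy : ∀ α, ⁅h α, y α⁆ = (2 * Complex.I) • x α)
    (hhy' : ∀ α β, α ≠ β → ⁅h α, y β⁆ = 0)
    (J : 𝔤 →ₗ[ℂ] 𝔤)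
    (hJx : ∀ α, J (x α) = y α)
    (hJy : ∀ α, J (y α) = -x α)
    (w : Ψ → ℝ) (V W : 𝔤)
    (hV : V = ∑ α, (w α : ℂ) • x α)
    (hW : W = ∑ α, (w α : ℂ) • y α) :
    ∀ β : Ψ,
      x β + J ⁅⁅W, V⁆, x β⁆ = ((1 + 4 * w β ^ 2 : ℝ) : ℂ) • x β ∧
      y β + J ⁅⁅W, V⁆, y β⁆ = ((1 + 4 * w β ^ 2 : ℝ) : ℂ) • y β := by
  have hWV : ⁅W, V⁆ = ∑ α, (-(2 * Complex.I) * (w α : ℂ) ^ 2) • h α := by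
    rw [← lie_skew, hW, lie_sum, ← Finset.sum_neg_distrib]
    refine Finset.sum_congr rfl fun α _ => ?_
    rw [lie_smul, hV, sum_smul_lie_of_lie_eq_zero x y _ hxy', hxy, smul_smul, smul_smul,
      ← neg_smul]
    ring_nf
  intro β
  have hx : ⁅⁅W, V⁆, x β⁆ = (-4 * (w β : ℂ) ^ 2) • y β := by
    rw [hWV, sum_smul_lie_of_lie_eq_zero h x _ hhx', hhx, smul_smul]
    congr 1
    linear_combination 4 * (w β : ℂ) ^ 2 * Complex.I_sq
  have hy : ⁅⁅W, V⁆, y β⁆ = (4 * (w β : ℂ) ^ 2) • x β := by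
    rw [hWV, sum_smul_lie_of_lie_eq_zero h y _ hhy', hhy, smul_smul]
    congr 1
    linear_combination -4 * (w β : ℂ) ^ 2 * Complex.I_sq
  push_cast
  constructor
  · rw [hx, map_smul, hJy, smul_neg, ← neg_smul, add_smul, one_smul]
    ring_nf
  · rw [hy, map_smul, hJx, add_smul, one_smul]
end

section
/- (Spectral bound used in the proof of Theorem 5.1: the eigenvalues of sinh(ad(ia))/ad(ia) are ≥ 1, hence this operator is injective.) The series ∑_{n=0}^∞ (1/(2n+1)!) • T^{2n} converges in the operator norm to a continuous linear operator S (the operator sinh(T)/T), and for every w ∈ H one has re ⟪S w, w⟫ ≥ ‖w‖². In particular S w = 0 implies w = 0. -/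
/-!
Every even power `T ^ (2 * n) = (T ^ n)† ∘ T ^ n` of a self-adjoint operator is positive, so all
terms of the series for `S = sinh T / T` after the first one, `1`, are positive operators. Passing
`w ↦ re ⟪· w, w⟫` through the sum gives `re ⟪S w, w⟫ ≥ re ⟪w, w⟫ = ‖w‖²`. The series converges
absolutely by comparison with the exponential series of `‖T‖`.
-/

open scoped InnerProductSpace

open Nat in
theorem summable_inv_factorial_smul_pow_two_mul {A : Type*} [NormedRing A] [NormedAlgebra ℝ A]
    [CompleteSpace A] (a : A) : Summable fun n : ℕ => (1 / (2 * n + 1)! : ℝ) • a ^ (2 * n) := by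
  -- the term `n = 0` is dropped since `‖a ^ 0‖ = ‖1‖` may exceed `‖a‖ ^ 0 = 1`
  rw [← summable_nat_add_iff 1]
  refine .of_norm_bounded ((Real.summable_pow_div_factorial ‖a‖).comp_injective
    (i := fun n => 2 * n + 2) fun m n h => by simp only at h; omega) fun n => ?_
  rw [norm_smul, Real.norm_of_nonneg (by positivity), one_div_mul_eq_div]
  show ‖a ^ (2 * n + 2)‖ / ((2 * n + 3)! : ℝ) ≤ ‖a‖ ^ (2 * n + 2) / (2 * n + 2)!
  exact div_le_div₀ (by positivity) (norm_pow_le' a (by omega)) (by positivity)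
    (by exact_mod_cast Nat.factorial_le (by omega))

theorem IsSelfAdjoint.isPositive_pow_two_mul {𝕜 E : Type*} [RCLike 𝕜] [NormedAddCommGroup E]
    [InnerProductSpace 𝕜 E] [CompleteSpace E] {T : E →L[𝕜] E} (hT : IsSelfAdjoint T) (n : ℕ) :
    (T ^ (2 * n)).IsPositive := by
  have := ContinuousLinearMap.isPositive_adjoint_comp_self (T ^ n)
  rwa [(hT.pow n).adjoint_eq, ← ContinuousLinearMap.mul_def, ← pow_add, ← two_mul] at this

theorem HasSum.sq_norm_le_re_inner {𝕜 E : Type*} [RCLike 𝕜] [NormedAddCommGroup E]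
    [InnerProductSpace 𝕜 E] {f : ℕ → E →L[𝕜] E} {S : E →L[𝕜] E} (hS : HasSum f S)
    (h0 : f 0 = 1) (hf : ∀ n ≠ 0, (f n).IsPositive) (w : E) :
    ‖w‖ ^ 2 ≤ RCLike.re ⟪S w, w⟫_𝕜 := by
  have hre : HasSum (fun n => RCLike.re ⟪f n w, w⟫_𝕜) (RCLike.re ⟪S w, w⟫_𝕜) := by
    simpa only [innerSL_apply_apply, ContinuousLinearMap.apply_apply, inner_re_symm w] using
      RCLike.hasSum_re _ ((hS.mapL (ContinuousLinearMap.apply 𝕜 E w)).mapL (innerSL 𝕜 w))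
  calc ‖w‖ ^ 2 = RCLike.re ⟪f 0 w, w⟫_𝕜 := by simp [h0]
    _ ≤ RCLike.re ⟪S w, w⟫_𝕜 := le_hasSum hre 0 fun n hn => (hf n hn).re_inner_nonneg_left w

/-- **spectral bound, proof of Theorem 5.1.** For a bounded self-adjoint
operator `T` on a complex Hilbert space `H`, the series `∑ (1/(2n+1)!) • T^{2n}` converges
in operator norm to a continuous linear operator `S = sinh(T)/T`, one has
`re ⟪S w, w⟫ ≥ ‖w‖²` for every `w`, and `S w = 0` implies `w = 0`. -/
theorem stmt12 (H : Type*) [NormedAddCommGroup H] [InnerProductSpace ℂ H] [CompleteSpace H]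
    (T : H →L[ℂ] H) (hT : IsSelfAdjoint T) :
    ∃ S : H →L[ℂ] H,
      HasSum (fun n : ℕ => ((1 / (Nat.factorial (2 * n + 1)) : ℝ) : ℂ) • T ^ (2 * n)) S ∧
      (∀ w : H, ‖w‖ ^ 2 ≤ (⟪S w, w⟫_ℂ).re) ∧
      (∀ w : H, S w = 0 → w = 0) := by
  obtain ⟨S, hS⟩ := summable_inv_factorial_smul_pow_two_mul T
  have hS' : HasSum (fun n : ℕ => ((1 / (Nat.factorial (2 * n + 1)) : ℝ) : ℂ) • T ^ (2 * n)) S := by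
    simpa only [Complex.coe_smul] using hS
  have hbound := hS'.sq_norm_le_re_inner (by simp) fun n _ =>
    (hT.isPositive_pow_two_mul n).smul_of_nonneg (Complex.zero_le_real.mpr (by positivity))
  refine ⟨S, hS', hbound, fun w hw => ?_⟩
  simpa [hw] using hbound w
end

section
/- (Operator bound used in the uniqueness argument of Theorem 3.1: the Hermitian operator (1 − cos(T))/T² has norm at most 1.) The series ∑_{n=0}^∞ ((−1)^n/(2n+2)!) • T^{2n} converges in the operator norm to a continuous linear operator C (the operator (1 − cos T)/T²), and for every w ∈ H one has 0 ≤ re ⟪C w, w⟫ ≤ (1/2)·‖w‖². -/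
/-!
The power series defines the entire function `f x = (1 - cos x) / x²` (with `f 0 = 1 / 2`),
and `0 ≤ 1 - cos x ≤ x² / 2` gives `0 ≤ f ≤ 1 / 2` on `ℝ`. The series converges uniformly on the
compact spectrum of `T`, so the continuous functional calculus carries it to a series for
`f(T)`, and monotonicity of the calculus gives `0 ≤ f(T) ≤ 1 / 2` in the Loewner order.
-/

open scoped InnerProductSpace
open Filter Nat Real

section CFC

variable {𝕜 A : Type*} {p : A → Prop} [RCLike 𝕜] [Ring A] [StarRing A] [TopologicalSpace A]
  [Algebra 𝕜 A] [ContinuousFunctionalCalculus 𝕜 A p]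

theorem hasSum_cfc_of_norm_le {f : ℕ → 𝕜 → 𝕜} {u : ℕ → ℝ} {a : A} (hu : Summable u)
    (hfu : ∀ n, ∀ x ∈ spectrum 𝕜 a, ‖f n x‖ ≤ u n)
    (hf : ∀ n, ContinuousOn (f n) (spectrum 𝕜 a)) :
    HasSum (fun n ↦ cfc (f n) a) (cfc (fun x ↦ ∑' n, f n x) a) := by
  have hsum (s : Finset ℕ) : ∑ n ∈ s, cfc (f n) a = cfc (fun x ↦ ∑ n ∈ s, f n x) a := by
    rw [← cfc_sum f a s fun n _ ↦ hf n]
    congr 1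
    ext x
    simp
  simp only [HasSum, hsum]
  exact tendsto_cfc_fun (tendstoUniformlyOn_tsum hu hfu)
    (Eventually.of_forall fun s ↦ continuousOn_finsetSum s fun n _ ↦ hf n)

end CFC

open ContinuousLinearMap in
theorem ContinuousLinearMap.re_inner_le_of_le_algebraMap {E : Type*} [NormedAddCommGroup E]
    [InnerProductSpace ℂ E] {T : E →L[ℂ] E} {r : ℝ} (h : T ≤ algebraMap ℝ (E →L[ℂ] E) r)
    (x : E) :
    (⟪T x, x⟫_ℂ).re ≤ r * ‖x‖ ^ 2 := by
  have := ((le_def _ _).mp h).re_inner_nonneg_left x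
  rwa [sub_apply, inner_sub_left, map_sub, sub_nonneg, Algebra.algebraMap_eq_smul_one, smul_apply,
    one_apply_eq_self, inner_smul_left_eq_smul, RCLike.smul_re, inner_self_eq_norm_sq] at this

theorem abs_neg_one_pow_div_factorial_mul_pow_le {x r : ℝ} (hx : |x| ≤ r) (n : ℕ) :
    |(-1 : ℝ) ^ n / (2 * n + 2)! * x ^ (2 * n)| ≤ (r ^ 2) ^ n / n ! := by
  rw [abs_mul, abs_div, abs_pow, abs_neg, abs_one, one_pow, Nat.abs_cast, abs_pow, pow_mul,
    sq_abs, one_div_mul_eq_div]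
  have hxr : x ^ 2 ≤ r ^ 2 := sq_le_sq' (abs_le.mp hx).1 (abs_le.mp hx).2
  gcongr ?_ / ?_
  · exact pow_le_pow_left₀ (sq_nonneg x) hxr n
  · exact_mod_cast Nat.factorial_le (by omega : n ≤ 2 * n + 2)

theorem summable_neg_one_pow_div_factorial_mul_pow (x : ℝ) :
    Summable fun n : ℕ ↦ (-1 : ℝ) ^ n / (2 * n + 2)! * x ^ (2 * n) :=
  .of_norm_bounded (Real.summable_pow_div_factorial _)
    (abs_neg_one_pow_div_factorial_mul_pow_le le_rfl)

noncomputable def oneSubCosDivSq (x : ℝ) : ℝ :=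
  ∑' n : ℕ, (-1 : ℝ) ^ n / (2 * n + 2)! * x ^ (2 * n)

theorem continuous_oneSubCosDivSq : Continuous oneSubCosDivSq := by
  refine continuous_iff_continuousAt.mpr fun x ↦ ?_
  have hu := Real.summable_pow_div_factorial ((|x| + 1) ^ 2)
  refine (continuousOn_tsum (fun n ↦ by fun_prop) hu fun n y hy ↦ ?_).continuousAt
    (Metric.isOpen_ball.mem_nhds (by simp : x ∈ Metric.ball 0 (|x| + 1)))
  exact abs_neg_one_pow_div_factorial_mul_pow_le (by simpa using (mem_ball_zero_iff.mp hy).le) n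

theorem hasSum_one_sub_cos (x : ℝ) :
    HasSum (fun n : ℕ ↦ (-1 : ℝ) ^ n * x ^ (2 * n + 2) / (2 * n + 2)!) (1 - cos x) := by
  have h := ((hasSum_nat_add_iff' 1).mpr (Real.hasSum_cos x)).neg
  rw [Finset.sum_range_one, neg_sub] at h
  norm_num at h
  refine h.congr_fun fun n ↦ ?_
  rw [pow_succ, mul_add, mul_one]
  ring

theorem sq_mul_oneSubCosDivSq (x : ℝ) : x ^ 2 * oneSubCosDivSq x = 1 - cos x := by
  refine ((summable_neg_one_pow_div_factorial_mul_pow x).hasSum.mul_left (x ^ 2)).unique ?_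
  refine (hasSum_one_sub_cos x).congr_fun fun n ↦ ?_
  ring

theorem oneSubCosDivSq_zero : oneSubCosDivSq 0 = 1 / 2 := by
  rw [oneSubCosDivSq, tsum_eq_single 0 fun n hn ↦ by simp [hn]]
  norm_num

theorem oneSubCosDivSq_mem_Icc (x : ℝ) : oneSubCosDivSq x ∈ Set.Icc 0 (1 / 2) := by
  rcases eq_or_ne x 0 with rfl | hx
  · simp [oneSubCosDivSq_zero]
  have hx2 : 0 < x ^ 2 := by positivity
  have h := sq_mul_oneSubCosDivSq x
  constructor
  · nlinarith [cos_le_one x]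
  · nlinarith [one_sub_sq_div_two_le_cos (x := x)]

theorem hasSum_cfc_oneSubCosDivSq {A : Type*} [Ring A] [StarRing A] [TopologicalSpace A]
    [Algebra ℝ A] [ContinuousFunctionalCalculus ℝ A IsSelfAdjoint] {a : A}
    (ha : IsSelfAdjoint a) :
    HasSum (fun n : ℕ ↦ ((-1 : ℝ) ^ n / (2 * n + 2)!) • a ^ (2 * n)) (cfc oneSubCosDivSq a) := by
  obtain ⟨r, hr⟩ :=
    (ContinuousFunctionalCalculus.isCompact_spectrum (R := ℝ) a).isBounded.subset_closedBall 0
  have h := hasSum_cfc_of_norm_le (Real.summable_pow_div_factorial (r ^ 2))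
    (fun n x hx ↦ abs_neg_one_pow_div_factorial_mul_pow_le (by simpa using hr hx) n)
    (fun n ↦ by fun_prop)
  refine h.congr_fun fun n ↦ ?_
  rw [cfc_const_mul .., cfc_pow_id ..]

/-- **operator bound, uniqueness argument of Theorem 3.1.** For a bounded
self-adjoint operator `T` on a complex Hilbert space `H`, the series
`∑ ((-1)^n/(2n+2)!) • T^{2n}` converges in operator norm to a continuous linear operator
`C = (1 - cos T)/T²`, and `0 ≤ re ⟪C w, w⟫ ≤ (1/2) ‖w‖²` for every `w`. -/
theorem stmt14 (H : Type*) [NormedAddCommGroup H] [InnerProductSpace ℂ H] [CompleteSpace H]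
    (T : H →L[ℂ] H) (hT : IsSelfAdjoint T) :
    ∃ C : H →L[ℂ] H,
      HasSum
        (fun n : ℕ => (((-1 : ℝ) ^ n / (Nat.factorial (2 * n + 2)) : ℝ) : ℂ) • T ^ (2 * n))
        C ∧
      (∀ w : H, 0 ≤ (⟪C w, w⟫_ℂ).re ∧ (⟪C w, w⟫_ℂ).re ≤ (1 / 2) * ‖w‖ ^ 2) := by
  refine ⟨cfc oneSubCosDivSq T, ?_, fun w ↦ ⟨?_, ?_⟩⟩
  · simpa only [Complex.coe_smul] using hasSum_cfc_oneSubCosDivSq hT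
  · have hC : 0 ≤ cfc oneSubCosDivSq T := cfc_nonneg fun x _ ↦ (oneSubCosDivSq_mem_Icc x).1
    exact ((ContinuousLinearMap.nonneg_iff_isPositive _).mp hC).re_inner_nonneg_left w
  · refine ContinuousLinearMap.re_inner_le_of_le_algebraMap ?_ w
    exact cfc_le_algebraMap _ _ _ (fun x _ ↦ (oneSubCosDivSq_mem_Icc x).2)
      continuous_oneSubCosDivSq.continuousOn
end

section
/- (Positivity of sin(ad(itb))/ad(itb) used in the proof of Theorem 3.1.) Assume ‖T‖ ≤ π. Then the series ∑_{n=0}^∞ ((−1)^n/(2n+1)!) • T^{2n} converges in the operator norm to a continuous linear operator S (the operator sin(T)/T), and for every w ∈ H one has re ⟪S w, w⟫ ≥ 0. -/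
/-!
The series is the Taylor series of `sinc x = sin x / x`. It converges in any Banach algebra
(its terms are dominated by `(‖T‖²)ⁿ / n!`), and for self-adjoint `T` its sum is `cfc sinc T`,
because the continuous functional calculus is a continuous algebra homomorphism and so commutes
with the series. The spectrum of `T` lies in `[-π, π]`, where `sinc ≥ 0`; hence `cfc sinc T ≥ 0`,
i.e. it is a positive operator.
-/

open scoped InnerProductSpace

open Real

lemma summable_sinc_series {A : Type*} [NormedRing A] [NormedAlgebra ℝ A] [CompleteSpace A]
    (x : A) :
    Summable (fun n : ℕ => ((-1 : ℝ) ^ n / (2 * n + 1).factorial) • x ^ (2 * n)) := by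
  refine (summable_pow_div_factorial (‖x‖ ^ 2)).of_norm_bounded_eventually_nat ?_
  filter_upwards [Filter.eventually_gt_atTop 0] with n hn
  have hfact : (n.factorial : ℝ) ≤ (2 * n + 1).factorial := by
    exact_mod_cast Nat.factorial_le (by omega)
  calc ‖((-1 : ℝ) ^ n / (2 * n + 1).factorial) • x ^ (2 * n)‖
      = ‖x ^ (2 * n)‖ / (2 * n + 1).factorial := by
        rw [norm_smul, norm_div, norm_pow, norm_neg, norm_one, one_pow, Real.norm_natCast]
        ring
    _ ≤ (‖x‖ ^ 2) ^ n / n.factorial := by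
        rw [← pow_mul]
        gcongr
        exact norm_pow_le' x (by omega)

namespace Real

lemma hasSum_sinc (x : ℝ) :
    HasSum (fun n : ℕ => (-1 : ℝ) ^ n / (2 * n + 1).factorial * x ^ (2 * n)) (sinc x) := by
  rcases eq_or_ne x 0 with rfl | hx
  · rw [sinc_zero]
    convert hasSum_ite_eq 0 (1 : ℝ) using 1
    funext n
    rcases n with _ | n <;> simp
  · rw [sinc_of_ne_zero hx]
    have hterm (n : ℕ) : (-1 : ℝ) ^ n * x ^ (2 * n + 1) / (2 * n + 1).factorial / x
        = (-1 : ℝ) ^ n / (2 * n + 1).factorial * x ^ (2 * n) := by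
      field_simp
      ring
    simpa only [hterm] using (hasSum_sin x).div_const x

lemma sinc_nonneg_of_abs_le_pi {x : ℝ} (hx : |x| ≤ π) : 0 ≤ sinc x := by
  have heven : sinc x = sinc |x| := by
    rcases abs_choice x with h | h <;> rw [h]
    rw [sinc_neg]
  rw [heven, sinc_apply]
  split_ifs
  · exact zero_le_one
  · exact div_nonneg (sin_nonneg_of_nonneg_of_le_pi (abs_nonneg x) hx) (abs_nonneg x)

end Real

open scoped ContinuousFunctionalCalculus in
lemma hasSum_cfc_sinc {A : Type*} [NormedRing A] [StarRing A] [NormedAlgebra ℝ A]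
    [ContinuousFunctionalCalculus ℝ A IsSelfAdjoint] {a : A} (ha : IsSelfAdjoint a) :
    HasSum (fun n : ℕ => ((-1 : ℝ) ^ n / (2 * n + 1).factorial) • a ^ (2 * n)) (cfc sinc a) := by
  set X : C(spectrum ℝ a, ℝ) := (ContinuousMap.id ℝ).restrict (spectrum ℝ a)
  have hX : HasSum (fun n : ℕ => ((-1 : ℝ) ^ n / (2 * n + 1).factorial) • X ^ (2 * n))
      ⟨(spectrum ℝ a).domRestrict sinc, continuous_sinc.continuousOn.domRestrict⟩ := by
    have hsum := summable_sinc_series X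
    refine hsum.hasSum_iff.mpr ?_
    ext x
    refine (hsum.hasSum.map _ (ContinuousMap.evalCLM ℝ x).continuous).unique ?_
    simpa [Function.comp_def, X] using hasSum_sinc x
  rw [cfc_apply sinc a ha continuous_sinc.continuousOn]
  simpa only [Function.comp_def, map_smul, map_pow, X, cfcHom_id ha] using
    hX.map (cfcHom ha) (cfcHom_continuous ha)

/-- **positivity of `sin(ad(itb))/ad(itb)`, proof of Theorem 3.1.** For a
bounded self-adjoint operator `T` on a complex Hilbert space `H` with `‖T‖ ≤ π`, the series
`∑ ((-1)^n/(2n+1)!) • T^{2n}` converges in operator norm to a continuous linear operator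
`S = sin(T)/T`, and `re ⟪S w, w⟫ ≥ 0` for every `w`. -/
theorem stmt15 (H : Type*) [NormedAddCommGroup H] [InnerProductSpace ℂ H] [CompleteSpace H]
    (T : H →L[ℂ] H) (hT : IsSelfAdjoint T) (hTnorm : ‖T‖ ≤ Real.pi) :
    ∃ S : H →L[ℂ] H,
      HasSum
        (fun n : ℕ => (((-1 : ℝ) ^ n / (Nat.factorial (2 * n + 1)) : ℝ) : ℂ) • T ^ (2 * n))
        S ∧
      (∀ w : H, 0 ≤ (⟪S w, w⟫_ℂ).re) := by
  refine ⟨cfc sinc T, ?_, fun w => ?_⟩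
  · simpa only [Complex.coe_smul] using hasSum_cfc_sinc hT
  · have hspec (x : ℝ) (hx : x ∈ spectrum ℝ T) : |x| ≤ π :=
      calc |x| ≤ ‖T‖ * ‖(1 : H →L[ℂ] H)‖ := spectrum.norm_le_norm_mul_of_mem hx
        _ ≤ ‖T‖ := mul_le_of_le_one_right (norm_nonneg T) ContinuousLinearMap.norm_id_le
        _ ≤ π := hTnorm
    have hS : 0 ≤ cfc sinc T := cfc_nonneg fun x hx => sinc_nonneg_of_abs_le_pi (hspec x hx)
    exact ((ContinuousLinearMap.nonneg_iff_isPositive _).mp hS).re_inner_nonneg_left w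
end
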